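/- arXiv:1007.4389 — 4 statements merged into one kernel-verified Lean document; each statement's English description precedes it below -/
import Mathlib

section
/- It holds that q_0 · p ≤ q_1 ≤ (q_0/(1-p̂)) · p. That is, if each node sends independently with probability at most p̂, then the probability q_1 of exactly one sender is sandwiched between the idle probability q_0 times the cumulative probability p and this quantity divided by (1-p̂). -/
/-!
Factoring out node `v`, the idle probability is `q₀ = (1 - p_v) · ∏_{w ≠ v} (1 - p_w)`, so the
`v`-th summand of `q₁` is `p_v · q₀ / (1 - p_v)`. Summing `1 ≤ 1 / (1 - p_v) ≤ 1 / (1 - p̂)`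
weighted by `p_v · q₀` gives both bounds.
-/

open Finset

section

variable {ι R : Type*} [DecidableEq ι] (s : Finset ι) (f : ι → R)

theorem prod_one_sub_mul_sum_le_sum_mul_prod_erase [CommRing R] [LinearOrder R]
    [IsStrictOrderedRing R] (hf : ∀ i ∈ s, f i ≤ 1) :
    (∏ i ∈ s, (1 - f i)) * ∑ i ∈ s, f i ≤ ∑ i ∈ s, f i * ∏ j ∈ s.erase i, (1 - f j) := by
  rw [mul_sum]
  refine sum_le_sum fun i hi => ?_
  have hrest : 0 ≤ ∏ j ∈ s.erase i, (1 - f j) :=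
    prod_nonneg fun j hj => sub_nonneg.2 (hf j (mem_of_mem_erase hj))
  rw [← mul_prod_erase s (fun j => 1 - f j) hi]
  nlinarith [mul_nonneg (sq_nonneg (f i)) hrest]

theorem one_sub_mul_prod_erase_le_prod [CommRing R] [LinearOrder R] [IsStrictOrderedRing R]
    {c : R} (hf : ∀ i ∈ s, f i ≤ 1) {i : ι} (hi : i ∈ s) (hfi : f i ≤ c) :
    (1 - c) * ∏ j ∈ s.erase i, (1 - f j) ≤ ∏ j ∈ s, (1 - f j) := by
  rw [← mul_prod_erase s (fun j => 1 - f j) hi]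
  exact mul_le_mul_of_nonneg_right (by linarith)
    (prod_nonneg fun j hj => sub_nonneg.2 (hf j (mem_of_mem_erase hj)))

theorem sum_mul_prod_erase_le_prod_one_sub_div_mul_sum [Field R] [LinearOrder R]
    [IsStrictOrderedRing R] {c : R} (hc : c < 1) (hf0 : ∀ i ∈ s, 0 ≤ f i)
    (hf1 : ∀ i ∈ s, f i ≤ 1) (hfc : ∀ i ∈ s, f i ≤ c) :
    ∑ i ∈ s, f i * ∏ j ∈ s.erase i, (1 - f j) ≤
      (∏ i ∈ s, (1 - f i)) / (1 - c) * ∑ i ∈ s, f i := by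
  rw [mul_sum]
  refine sum_le_sum fun i hi => ?_
  rw [mul_comm (f i)]
  refine mul_le_mul_of_nonneg_right ?_ (hf0 i hi)
  rw [le_div_iff₀ (sub_pos.2 hc), mul_comm]
  exact one_sub_mul_prod_erase_le_prod s f hf1 hi (hfc i hi)

end

theorem idle_success_relation_general {V : Type*} [Fintype V] [DecidableEq V] (p : V → ℝ) (phat : ℝ)
    (hphat1 : phat < 1)
    (hp0 : ∀ v, 0 ≤ p v) (hp1 : ∀ v, p v ≤ 1) (hple : ∀ v, p v ≤ phat) :
    (∏ v, (1 - p v)) * (∑ v, p v) ≤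
      (∑ v, p v * ∏ w ∈ univ.erase v, (1 - p w)) ∧
    (∑ v, p v * ∏ w ∈ univ.erase v, (1 - p w)) ≤
      ((∏ v, (1 - p v)) / (1 - phat)) * (∑ v, p v) :=
  ⟨prod_one_sub_mul_sum_le_sum_mul_prod_erase univ p fun v _ => hp1 v,
    sum_mul_prod_erase_le_prod_one_sub_div_mul_sum univ p hphat1 (fun v _ => hp0 v)
      (fun v _ => hp1 v) fun v _ => hple v⟩

/-- If each node `v` of a finite set `V` sends independently with probability
`p v ∈ [0,1]`, `p v ≤ p̂` with `0 < p̂ < 1`, then the probability `q₁` of exactly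
one sender is sandwiched: `q₀ · P ≤ q₁ ≤ (q₀/(1-p̂)) · P`, where `P = ∑ p v` is the
cumulative probability and `q₀ = ∏ (1 - p v)` is the idle probability. -/
theorem idle_success_relation {V : Type*} [Fintype V] [DecidableEq V] (p : V → ℝ) (phat : ℝ)
    (hphat0 : 0 < phat) (hphat1 : phat < 1)
    (hp0 : ∀ v, 0 ≤ p v) (hp1 : ∀ v, p v ≤ 1) (hple : ∀ v, p v ≤ phat) :
    (∏ v, (1 - p v)) * (∑ v, p v) ≤
      (∑ v, p v * ∏ w ∈ univ.erase v, (1 - p w)) ∧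
    (∑ v, p v * ∏ w ∈ univ.erase v, (1 - p w)) ≤
      ((∏ v, (1 - p v)) / (1 - phat)) * (∑ v, p v) :=
  idle_success_relation_general p phat hphat1 hp0 hp1 hple
end

section
/- The probability of a successful transmission satisfies q_1 = ∑_{v∈V} p_v ∏_{w∈V, w≠v} (1-p_w) ≥ p · exp(-p/(1-p̂)). -/
open Finset

/-! Since `log y ≥ 1 - 1/y`, each factor satisfies `1 - p_w ≥ exp(-p_w/(1-p_w)) ≥ exp(-p_w/(1-p̂))`.
Hence `∏_{w≠v} (1 - p_w) ≥ exp(-∑_{w≠v} p_w/(1-p̂)) ≥ exp(-p/(1-p̂))` for every `v`, and summing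
against the weights `p_v` gives the bound. -/

namespace Real

lemma exp_neg_div_one_sub_le {x : ℝ} (hx : x < 1) : exp (-x / (1 - x)) ≤ 1 - x := by
  have hpos : 0 < 1 - x := by linarith
  have hlog : -x / (1 - x) ≤ log (1 - x) := by
    convert one_sub_inv_le_log_of_pos hpos using 1
    field_simp
    ring
  calc exp (-x / (1 - x)) ≤ exp (log (1 - x)) := exp_le_exp.mpr hlog
    _ = 1 - x := exp_log hpos

lemma exp_neg_div_le_one_sub {x c : ℝ} (hx : 0 ≤ x) (hxc : x ≤ c) (hc : c < 1) :
    exp (-x / (1 - c)) ≤ 1 - x := by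
  have hmono : x / (1 - x) ≤ x / (1 - c) := div_le_div_of_nonneg_left hx (by linarith) (by linarith)
  calc exp (-x / (1 - c)) ≤ exp (-x / (1 - x)) := by
        rw [exp_le_exp, neg_div, neg_div]
        exact neg_le_neg hmono
    _ ≤ 1 - x := exp_neg_div_one_sub_le (hxc.trans_lt hc)

lemma exp_neg_sum_div_le_prod_one_sub {ι : Type*} (s : Finset ι) (f : ι → ℝ) {c : ℝ}
    (hc : c < 1) (hf0 : ∀ i ∈ s, 0 ≤ f i) (hfc : ∀ i ∈ s, f i ≤ c) :
    exp (-(∑ i ∈ s, f i) / (1 - c)) ≤ ∏ i ∈ s, (1 - f i) := by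
  rw [← sum_neg_distrib, sum_div, exp_sum]
  exact prod_le_prod (fun i _ => (exp_pos _).le)
    (fun i hi => exp_neg_div_le_one_sub (hf0 i hi) (hfc i hi) hc)

end Real

theorem success_prob_lower_bound_general {V : Type*} [Fintype V] [DecidableEq V]
    (p : V → ℝ) (phat : ℝ) (hphat1 : phat < 1)
    (hp0 : ∀ v, 0 ≤ p v) (hple : ∀ v, p v ≤ phat) :
    (∑ v, p v * ∏ w ∈ univ.erase v, (1 - p w)) ≥
      (∑ v, p v) * Real.exp (-(∑ v, p v) / (1 - phat)) := by
  rw [ge_iff_le, sum_mul]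
  refine sum_le_sum fun v _ => mul_le_mul_of_nonneg_left ?_ (hp0 v)
  have hsum : ∑ w ∈ univ.erase v, p w ≤ ∑ w, p w :=
    sum_le_sum_of_subset_of_nonneg (erase_subset _ _) fun w _ _ => hp0 w
  calc Real.exp (-(∑ w, p w) / (1 - phat))
      ≤ Real.exp (-(∑ w ∈ univ.erase v, p w) / (1 - phat)) := by
        rw [Real.exp_le_exp]
        exact div_le_div_of_nonneg_right (neg_le_neg hsum) (by linarith)
    _ ≤ ∏ w ∈ univ.erase v, (1 - p w) :=
        Real.exp_neg_sum_div_le_prod_one_sub _ _ hphat1 (fun w _ => hp0 w) fun w _ => hple w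

/-- If each node `v` of a finite set `V` sends independently with probability
`p v ∈ [0,1]`, `p v ≤ p̂` with `0 < p̂ < 1`, then the probability of a successful
transmission satisfies `q₁ = ∑_v p v ∏_{w≠v} (1 - p w) ≥ P · exp(-P/(1-p̂))`,
where `P = ∑ p v` is the cumulative sending probability. -/
theorem success_prob_lower_bound {V : Type*} [Fintype V] [DecidableEq V]
    (p : V → ℝ) (phat : ℝ) (hphat0 : 0 < phat) (hphat1 : phat < 1)
    (hp0 : ∀ v, 0 ≤ p v) (hp1 : ∀ v, p v ≤ 1) (hple : ∀ v, p v ≤ phat) :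
    (∑ v, p v * ∏ w ∈ univ.erase v, (1 - p w)) ≥
      (∑ v, p v) * Real.exp (-(∑ v, p v) / (1 - phat)) :=
  success_prob_lower_bound_general p phat hphat1 hp0 hple
end

section
/- If Φ is a real number with 1 ≤ Φ ≤ p, then the probability of a successful transmission satisfies q_1 = ∑_{v∈V} p_v ∏_{w∈V, w≠v} (1-p_w) ≤ (1/(1-p̂)) · Φ · exp(-Φ). -/
/-!
Removing one factor `1 - p v ≥ 1 - p̂` from `∏ (1 - p w)` costs at most a factor `1/(1 - p̂)`,
so `q₁ ≤ P ∏ (1 - p w) / (1 - p̂) ≤ P e^{-P} / (1 - p̂)` by `1 - x ≤ e^{-x}`.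
Since `x ↦ x e^{-x}` decreases on `[1, ∞)` and `1 ≤ Φ ≤ P`, this is at most `Φ e^{-Φ} / (1 - p̂)`.
-/

open Finset

namespace Real

theorem mul_exp_neg_le_mul_exp_neg {a b : ℝ} (ha : 1 ≤ a) (hab : a ≤ b) :
    b * exp (-b) ≤ a * exp (-a) := by
  -- `a e^{b-a} ≥ a (1 + b - a) ≥ b`, the last step being `(a - 1)(b - a) ≥ 0`.
  have hb : b ≤ a * exp (b - a) := by
    nlinarith [mul_le_mul_of_nonneg_left (add_one_le_exp (b - a)) (by linarith : 0 ≤ a)]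
  calc b * exp (-b) ≤ a * exp (b - a) * exp (-b) := by gcongr
    _ = a * exp (-a) := by rw [mul_assoc, ← exp_add]; ring_nf

end Real

namespace Finset

variable {ι : Type*}

theorem prod_one_sub_le_exp_neg_sum (s : Finset ι) {x : ι → ℝ} (hx : ∀ i ∈ s, x i ≤ 1) :
    ∏ i ∈ s, (1 - x i) ≤ Real.exp (-∑ i ∈ s, x i) := by
  rw [← sum_neg_distrib, Real.exp_sum]
  exact prod_le_prod (fun i hi => sub_nonneg.2 (hx i hi)) fun i _ => Real.one_sub_le_exp_neg _

theorem prod_erase_one_sub_le_div [DecidableEq ι] (s : Finset ι) {x : ι → ℝ} {c : ℝ}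
    (hc : c < 1) (hx : ∀ i ∈ s, x i ≤ c) {j : ι} (hj : j ∈ s) :
    ∏ i ∈ s.erase j, (1 - x i) ≤ (∏ i ∈ s, (1 - x i)) / (1 - c) := by
  have hnonneg : 0 ≤ ∏ i ∈ s.erase j, (1 - x i) :=
    prod_nonneg fun i hi => by linarith [hx i (mem_of_mem_erase hi)]
  rw [← mul_prod_erase s _ hj, le_div_iff₀ (by linarith)]
  nlinarith [hx j hj]

end Finset

theorem success_prob_upper_bound_general {V : Type*} [Fintype V] [DecidableEq V]
    (p : V → ℝ) (phat : ℝ) (hphat1 : phat < 1)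
    (hp0 : ∀ v, 0 ≤ p v) (hple : ∀ v, p v ≤ phat)
    (Φ : ℝ) (hΦ1 : 1 ≤ Φ) (hΦp : Φ ≤ ∑ v, p v) :
    (∑ v, p v * ∏ w ∈ univ.erase v, (1 - p w)) ≤
      (1 / (1 - phat)) * Φ * Real.exp (-Φ) := by
  set P := ∑ v, p v
  have hprod : ∏ w, (1 - p w) ≤ Real.exp (-P) :=
    prod_one_sub_le_exp_neg_sum univ fun w _ => (hple w).trans hphat1.le
  calc ∑ v, p v * ∏ w ∈ univ.erase v, (1 - p w)
      ≤ ∑ v, p v * ((∏ w, (1 - p w)) / (1 - phat)) := by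
        gcongr with v
        · exact hp0 v
        · exact prod_erase_one_sub_le_div univ hphat1 (fun w _ => hple w) (mem_univ v)
    _ = P * (∏ w, (1 - p w)) / (1 - phat) := by rw [← sum_mul]; ring
    _ ≤ P * Real.exp (-P) / (1 - phat) := by
        gcongr
        exact sum_nonneg fun v _ => hp0 v
    _ ≤ Φ * Real.exp (-Φ) / (1 - phat) := by
        gcongr ?_ / _
        exact Real.mul_exp_neg_le_mul_exp_neg hΦ1 hΦp
    _ = (1 / (1 - phat)) * Φ * Real.exp (-Φ) := by ring

/-- If each node `v` of a finite set `V` sends independently with probability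
`p v ∈ [0,1]`, `p v ≤ p̂` with `0 < p̂ < 1`, and `Φ` is a real number with
`1 ≤ Φ ≤ P` where `P = ∑ p v` is the cumulative sending probability, then the
probability of a successful transmission satisfies
`q₁ = ∑_v p v ∏_{w≠v} (1 - p w) ≤ (1/(1-p̂)) · Φ · exp(-Φ)`. -/
theorem success_prob_upper_bound {V : Type*} [Fintype V] [DecidableEq V]
    (p : V → ℝ) (phat : ℝ) (hphat0 : 0 < phat) (hphat1 : phat < 1)
    (hp0 : ∀ v, 0 ≤ p v) (hp1 : ∀ v, p v ≤ 1) (hple : ∀ v, p v ≤ phat)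
    (Φ : ℝ) (hΦ1 : 1 ≤ Φ) (hΦp : Φ ≤ ∑ v, p v) :
    (∑ v, p v * ∏ w ∈ univ.erase v, (1 - p w)) ≤
      (1 / (1 - phat)) * Φ * Real.exp (-Φ) :=
  success_prob_upper_bound_general p phat hphat1 hp0 hple Φ hΦ1 hΦp
end

section
/- Let T₀, k, ℓ be natural numbers with T₀ ≥ 1 and let f be a nonnegative real number. If ∑_{i=0}^{ℓ} max(T₀ + 2i - k, 1) ≤ f, then ℓ ≤ k/2 + √f (as an inequality of real numbers). -/
/-! The terms `max (2 (i + a) + 1) 1` are the odd numbers once `i + a ≥ 0` and at least `1` before,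
so their partial sums dominate the squares `max (n + a) 0 ^ 2`; with `a = -k/2` and `T₀ ≥ 1` this
gives `f ≥ (ℓ + 1 - k/2) ^ 2`. -/

lemma sq_max_add_one_zero_le (t : ℝ) :
    max (t + 1) 0 ^ 2 ≤ max t 0 ^ 2 + max (2 * t + 1) 1 := by
  rcases le_total 0 t with ht | ht
  · rw [max_eq_left (by linarith), max_eq_left ht]
    nlinarith [le_max_left (2 * t + 1) 1]
  · have h0 : 0 ≤ max (t + 1) 0 := le_max_right _ _
    have h1 : max (t + 1) 0 ≤ 1 := max_le (by linarith) zero_le_one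
    nlinarith [le_max_right (2 * t + 1) 1, sq_nonneg (max t 0)]

lemma sq_max_zero_le_sum_max_odd {a : ℝ} (ha : a ≤ 0) (n : ℕ) :
    max (n + a) 0 ^ 2 ≤ ∑ i ∈ Finset.range n, max (2 * (i + a) + 1) 1 := by
  induction n with
  | zero => simp [max_eq_right ha]
  | succ n ih =>
    rw [Finset.sum_range_succ]
    push_cast
    rw [show (n : ℝ) + 1 + a = n + a + 1 by ring]
    linarith [sq_max_add_one_zero_le (n + a)]

theorem window_increase_bound_general (T₀ k ℓ : ℕ) (hT : 1 ≤ T₀) (f : ℝ)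
    (h : (∑ i ∈ Finset.range (ℓ + 1),
        ((max ((T₀ : ℤ) + 2 * (i : ℤ) - (k : ℤ)) 1 : ℤ) : ℝ)) ≤ f) :
    (ℓ : ℝ) ≤ (k : ℝ) / 2 + Real.sqrt f := by
  have hterm : ∀ i ∈ Finset.range (ℓ + 1), max (2 * ((i : ℝ) + -(k / 2)) + 1) 1 ≤
      ((max ((T₀ : ℤ) + 2 * (i : ℤ) - (k : ℤ)) 1 : ℤ) : ℝ) := by
    intro i _
    have hT' : (1 : ℝ) ≤ T₀ := by exact_mod_cast hT
    push_cast
    exact max_le_max_right _ (by linarith)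
  have hk : -((k : ℝ) / 2) ≤ 0 := neg_nonpos.mpr (by positivity)
  have hsq := (sq_max_zero_le_sum_max_odd hk (ℓ + 1)).trans ((Finset.sum_le_sum hterm).trans h)
  have hsqrt := Real.le_sqrt_of_sq_le hsq
  push_cast at hsqrt
  linarith [le_max_left ((ℓ : ℝ) + 1 + -(k / 2)) 0]

/-- If `T₀ ≥ 1` and `∑_{i=0}^{ℓ} max(T₀ + 2i - k, 1) ≤ f` for a nonnegative real
`f`, then `ℓ ≤ k/2 + √f` (as real numbers). -/
theorem window_increase_bound (T₀ k ℓ : ℕ) (hT : 1 ≤ T₀) (f : ℝ) (hf : 0 ≤ f)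
    (h : (∑ i ∈ Finset.range (ℓ + 1),
        ((max ((T₀ : ℤ) + 2 * (i : ℤ) - (k : ℤ)) 1 : ℤ) : ℝ)) ≤ f) :
    (ℓ : ℝ) ≤ (k : ℝ) / 2 + Real.sqrt f :=
  window_increase_bound_general T₀ k ℓ hT f h
end
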